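/- arXiv:1905.00048 — 2 statements merged into one kernel-verified Lean document; each statement's English description precedes it below -/
import Mathlib

section
/- Suppose the lower-tail GPD piece and the spline piece Σₘ θₘ Iₘ(τ) have matching derivatives up to order q at τ_L, and among I-spline basis functions, I_{q+1} is the lowest-index basis whose (q+1)-th derivative at τ_L can be nonzero beyond I₁,...,I_q. Then the (q+1)-th derivatives match at τ_L (equivalently, the density of Y is q-th order differentiable at Q(τ_L)) if and only if θ_{q+1} = (1/I_{q+1}^{(q+1)}(τ_L)) · [ -(σ_L/(α_L τ_L^{q+1})) ∏_{j=0}^{q}(-α_L - j) - Σ_{m=1}^{q} θₘ Iₘ^{(q+1)}(τ_L) ]. -/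
/-!
On `τ > 0` the lower GPD piece is an affine function of `τ ^ (-α_L)`, so its `(q+1)`-th
derivative at `τ_L` is `-σ_L / (α_L τ_L^{q+1})` times the falling factorial
`(-α_L)(-α_L-1)⋯(-α_L-q)`. Since `I₀^{(q+1)}(τ_L) = 0` and `Iₘ^{(q+1)}(τ_L) = 0` for `m > q+1`,
the spline side is affine in `θ_{q+1}` with nonzero slope `I_{q+1}^{(q+1)}(τ_L)`, and the
matching condition is solved for `θ_{q+1}`.
-/

open Set

theorem Real.iteratedDeriv_rpow_const (a x : ℝ) (n : ℕ) :
    iteratedDeriv n (fun x : ℝ => x ^ a) x = (descPochhammer ℝ n).eval a * x ^ (a - n) := by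
  rw [iteratedDeriv_eq_iterate, Real.iter_deriv_rpow_const]

theorem Real.iteratedDeriv_div_rpow_const {c x : ℝ} (hc : 0 < c) (hx : 0 < x) (a : ℝ) (n : ℕ) :
    iteratedDeriv n (fun τ : ℝ => (τ / c) ^ a) x
      = (descPochhammer ℝ n).eval a * x ^ (a - n) / c ^ a := by
  have h : (fun τ : ℝ => (τ / c) ^ a) =ᶠ[nhds x] fun τ => τ ^ a / c ^ a := by
    filter_upwards [Ioi_mem_nhds hx] with τ hτ using Real.div_rpow (le_of_lt hτ) hc.le a
  rw [h.iteratedDeriv_eq, iteratedDeriv_div_const, Real.iteratedDeriv_rpow_const]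

theorem iteratedDeriv_gpdLowerQuantile_self {τL : ℝ} (hτL : 0 < τL) (θ₀ σ α : ℝ) (n : ℕ) :
    iteratedDeriv (n + 1) (fun τ : ℝ => θ₀ - σ / α * ((τ / τL) ^ (-α) - 1)) τL
      = -(σ / (α * τL ^ (n + 1))) * ∏ j ∈ Finset.range (n + 1), (-α - (j : ℝ)) := by
  have hshift : (fun τ : ℝ => θ₀ - σ / α * ((τ / τL) ^ (-α) - 1))
      = fun τ => (θ₀ + σ / α) - σ / α * (τ / τL) ^ (-α) := by
    funext τ; ring
  rw [hshift, iteratedDeriv_const_sub n.succ_pos, iteratedDeriv_neg,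
    iteratedDeriv_const_mul_field, Real.iteratedDeriv_div_rpow_const hτL hτL,
    descPochhammer_eval_eq_prod_range, sub_eq_add_neg (-α), Real.rpow_add hτL,
    Real.rpow_neg hτL.le (n + 1 : ℕ), Real.rpow_natCast]
  have : τL ^ (-α) ≠ 0 := (Real.rpow_pos_of_pos hτL _).ne'
  field_simp

theorem Finset.sum_range_eq_sum_Icc_add_of_eq_zero {M : Type*} [AddCommMonoid M] {N q : ℕ}
    (hq : q + 1 ≤ N) {f : ℕ → M} (h0 : f 0 = 0) (hvan : ∀ m, q + 1 < m → f m = 0) :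
    ∑ m ∈ Finset.range (N + 1), f m = ∑ m ∈ Finset.Icc 1 q, f m + f (q + 1) := by
  rw [← Finset.sum_Icc_succ_top (by omega)]
  refine (Finset.sum_subset (fun m hm => ?_) fun m _ hm => ?_).symm
  · simp only [Finset.mem_Icc, Finset.mem_range] at hm ⊢; omega
  · simp only [Finset.mem_Icc, not_and_or, not_le] at hm
    rcases hm with hm | hm
    · rw [Nat.lt_one_iff.mp hm, h0]
    · exact hvan m hm

theorem stmt10_general (M q : ℕ) (hq : q + 1 ≤ M) (σL αL τL θ0 : ℝ)
    (hτ : τL ∈ Ioo (0:ℝ) 1)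
    (d : ℕ → ℝ)
    (hd0 : d 0 = 0) (hvan : ∀ m, q + 1 < m → d m = 0) (hne : d (q + 1) ≠ 0)
    (θ : ℕ → ℝ) :
    (iteratedDeriv (q + 1)
        (fun τ : ℝ => θ0 - σL / αL * (Real.rpow (τ / τL) (-αL) - 1)) τL
      = ∑ m ∈ Finset.range (M + 1), θ m * d m)
    ↔ θ (q + 1)
        = (1 / d (q + 1)) *
            (-(σL / (αL * τL ^ (q + 1))) * (∏ j ∈ Finset.range (q + 1), (-αL - (j : ℝ)))
              - ∑ m ∈ Finset.Icc 1 q, θ m * d m) := by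
  simp only [Real.rpow_eq_pow]
  rw [iteratedDeriv_gpdLowerQuantile_self hτ.1,
    Finset.sum_range_eq_sum_Icc_add_of_eq_zero hq (by rw [hd0, mul_zero])
      fun m hm => by rw [hvan m hm, mul_zero],
    one_div_mul_eq_div, eq_div_iff hne]
  constructor <;> intro h <;> linarith

/-- `q`-th order differentiability of the density at `Q(τ_L)`: assuming the
derivatives up to order `q` already match, the `(q+1)`-th derivatives of the lower
GPD piece and the spline piece `Σₘ θₘ Iₘ` match at `τ_L` iff
`θ_{q+1} = (1/I_{q+1}^{(q+1)}(τ_L)) [ -(σ_L/(α_L τ_L^{q+1})) ∏_{j=0}^{q}(-α_L-j)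
  - Σ_{m=1}^{q} θₘ Iₘ^{(q+1)}(τ_L) ]`. -/
theorem stmt10 (M q : ℕ) (hq : q + 1 ≤ M) (σL αL τL θ0 : ℝ)
    (hσ : 0 < σL) (hα : αL ≠ 0) (hτ : τL ∈ Ioo (0:ℝ) 1)
    (I : ℕ → ℝ → ℝ) (d : ℕ → ℝ)
    (hd : ∀ m, iteratedDeriv (q + 1) (I m) τL = d m)
    (hd0 : d 0 = 0) (hvan : ∀ m, q + 1 < m → d m = 0) (hne : d (q + 1) ≠ 0)
    (θ : ℕ → ℝ)
    (hmatch : ∀ k ≤ q,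
      iteratedDeriv k (fun τ : ℝ => θ0 - σL / αL * (Real.rpow (τ / τL) (-αL) - 1)) τL
        = iteratedDeriv k (fun τ : ℝ => ∑ m ∈ Finset.range (M + 1), θ m * I m τ) τL) :
    (iteratedDeriv (q + 1)
        (fun τ : ℝ => θ0 - σL / αL * (Real.rpow (τ / τL) (-αL) - 1)) τL
      = ∑ m ∈ Finset.range (M + 1), θ m * d m)
    ↔ θ (q + 1)
        = (1 / d (q + 1)) *
            (-(σL / (αL * τL ^ (q + 1))) * (∏ j ∈ Finset.range (q + 1), (-αL - (j : ℝ)))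
              - ∑ m ∈ Finset.Icc 1 q, θ m * d m) :=
  stmt10_general M q hq σL αL τL θ0 hτ d hd0 hvan hne θ
end

section
/- For the piecewise quantile function with lower GPD tail, if the density is required to be first-order differentiable at Q(τ_L) and the coefficient θ₂ must be non-negative, then the shape parameter satisfies α_L ≤ -1 - τ_L · I₁^{(2)}(τ_L)/I₁'(τ_L) whenever the continuity constraint θ₁ = σ_L/(τ_L I₁'(τ_L)) holds and I₂^{(2)}(τ_L) > 0, I₁'(τ_L) > 0, I₁^{(2)}(τ_L) ≤ 0. -/
open Set

/-- Requiring first-order differentiability of the density at `Q(τ_L)` together with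
non-negativity of `θ₂` bounds the lower shape parameter:
`α_L ≤ -1 - τ_L I₁''(τ_L)/I₁'(τ_L)`. -/
theorem stmt17 (σL αL τL θ1 θ2 dI1 d2I1 d2I2 : ℝ)
    (hσ : 0 < σL) (hαneg : αL < 0) (hτ : τL ∈ Ioo (0:ℝ) 1)
    (hdI1 : 0 < dI1) (hd2I1 : d2I1 ≤ 0) (hd2I2 : 0 < d2I2)
    (hθ1 : θ1 = σL / (τL * dI1))
    (hθ2 : θ2 = (1 / d2I2) *
      (-(σL / (αL * τL ^ 2)) * ((-αL) * (-αL - 1)) - θ1 * d2I1))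
    (hpos : 0 ≤ θ2) :
    αL ≤ -1 - τL * d2I1 / dI1 := by
  obtain ⟨hτ0, hτ1⟩ := hτ
  have hα : αL ≠ 0 := ne_of_lt hαneg
  have hτne : τL ≠ 0 := ne_of_gt hτ0
  have hdne : dI1 ≠ 0 := ne_of_gt hdI1
  subst hθ1 hθ2
  set E := -(σL / (αL * τL ^ 2)) * ((-αL) * (-αL - 1)) - σL / (τL * dI1) * d2I1 with hEdef
  have hE : 0 ≤ E := by
    by_contra h
    push_neg at h
    nlinarith [mul_neg_of_pos_of_neg (one_div_pos.mpr hd2I2) h]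
  have hEm : 0 ≤ E * (τL ^ 2 * dI1) := mul_nonneg hE (by positivity)
  have hEeq : E * (τL ^ 2 * dI1) = -σL * (αL + 1) * dI1 - σL * d2I1 * τL := by
    rw [hEdef]; field_simp; ring
  rw [hEeq] at hEm
  have key2 : (αL + 1) * dI1 ≤ -d2I1 * τL := by
    by_contra h
    push_neg at h
    nlinarith [mul_pos hσ (show 0 < (αL + 1) * dI1 + d2I1 * τL by linarith)]
  have goal' : τL * d2I1 ≤ (-1 - αL) * dI1 := by nlinarith
  have := (div_le_iff₀ hdI1).mpr goal'
  linarith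
end
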